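/- Let Q(x,y) be a homogeneous polynomial of degree d in two variables over a field of characteristic zero such that Q(s1+s2, s3) is a symmetric polynomial in s1, s2, s3. Then there exists a scalar c with Q(x,y) = c*(x+y)^d. -/
import Mathlib

open MvPolynomial

lemma eval_mul_of_isHomogeneous' {K : Type*} [CommSemiring K] {σ : Type*} [Fintype σ]
    {Q : MvPolynomial σ K} {d : ℕ} (hhom : Q.IsHomogeneous d) (r : K) (x : σ → K) :
    eval (fun i => r * x i) Q = r ^ d * eval x Q := by
  rw [eval_eq', eval_eq', Finset.mul_sum]
  refine Finset.sum_congr rfl fun m hm => ?_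
  have hd : ∑ i, m i = d := by
    have h := hhom (mem_support_iff.mp hm)
    simpa [Finsupp.weight_apply, Finsupp.sum_fintype] using h
  calc (Q.coeff m) * ∏ i, (r * x i) ^ m i
      = Q.coeff m * ((∏ i, r ^ m i) * ∏ i, x i ^ m i) := by
        rw [← Finset.prod_mul_distrib]; simp [mul_pow]
    _ = r ^ d * (Q.coeff m * ∏ i, x i ^ m i) := by
        rw [Finset.prod_pow_eq_pow_sum, hd]; ring

theorem stmt_6 {K : Type*} [Field K] [CharZero K] (d : ℕ)
    (Q : MvPolynomial (Fin 2) K) (hhom : Q.IsHomogeneous d)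
    (hsym : (bind₁ ![(X 0 + X 1 : MvPolynomial (Fin 3) K), X 2] Q).IsSymmetric) :
    ∃ c : K, Q = C c * (X 0 + X 1) ^ d := by
  have key : ∀ a b : K, eval ![a, b] Q = eval ![a + b, 0] Q := by
    intro a b
    have h := hsym (Equiv.swap (1 : Fin 3) 2)
    have h2 := congrArg (eval ![a, b, 0]) h
    rw [eval_rename] at h2
    rw [show (eval ![a,b,0] : MvPolynomial (Fin 3) K →+* K) = eval₂Hom (RingHom.id K) ![a,b,0] from rfl,
        show (eval (![a,b,0] ∘ (Equiv.swap (1 : Fin 3) 2)) : MvPolynomial (Fin 3) K →+* K)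
          = eval₂Hom (RingHom.id K) (![a,b,0] ∘ (Equiv.swap (1 : Fin 3) 2)) from rfl,
        eval₂Hom_bind₁, eval₂Hom_bind₁] at h2
    have e1 : (fun i => eval₂Hom (RingHom.id K)
        (![a,b,0] ∘ (Equiv.swap (1 : Fin 3) 2)) (![(X 0 + X 1 : MvPolynomial (Fin 3) K), X 2] i))
        = ![a, b] := by
      funext i
      fin_cases i <;> simp [Equiv.swap_apply_of_ne_of_ne]
    have e2 : (fun i => eval₂Hom (RingHom.id K)
        ![a,b,0] (![(X 0 + X 1 : MvPolynomial (Fin 3) K), X 2] i)) = ![a + b, 0] := by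
      funext i
      fin_cases i <;> simp
    rw [e1, e2] at h2
    exact h2
  set c := eval ![(1 : K), 0] Q with hc
  refine ⟨c, MvPolynomial.funext fun x => ?_⟩
  have hx : x = ![x 0, x 1] := by
    funext i; fin_cases i <;> rfl
  have h1 : eval x Q = eval ![x 0 + x 1, 0] Q := by
    rw [hx]; exact key (x 0) (x 1)
  have h2 : eval ![x 0 + x 1, 0] Q = (x 0 + x 1) ^ d * c := by
    have := eval_mul_of_isHomogeneous' hhom (x 0 + x 1) ![(1 : K), 0]
    rw [hc, ← this]
    have : (fun i => (x 0 + x 1) * ![(1:K), 0] i) = ![x 0 + x 1, 0] := by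
      funext i; fin_cases i <;> simp
    rw [this]
  rw [h1, h2]
  simp [mul_comm]
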